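/- arXiv:2602.05680 — 6 statements merged into one kernel-verified Lean document; each statement's English description precedes it below -/
import Mathlib

section
/- Let u : ℝ × ℝ → ℝ be smooth, and suppose that for each s the function x ↦ u(x,s) satisfies u_xxxx + σ u_xx + V'(u) = 0. Define the Lagrangian density L = u_x u_xxx + (1/2) u_xx² + (1/2) σ u_x² − V(u) and the action density A = u_xxx u_s + u_x u_xxs + σ u_x u_s. Then ∂L/∂s = ∂A/∂x. -/
/-!
Once the mixed partials `u_sx = u_xs`, `u_xxsx = u_xxxs` are identified, the terms
`u_xs u_xxx + u_x u_xxxs + u_xx u_xxs + σ u_x u_xs` occur in both `∂L/∂s` and `∂A/∂x`, and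
`∂A/∂x - ∂L/∂s = u_s (u_xxxx + σ u_xx + V'(u))`, which vanishes by the equation.
-/

theorem hasDerivAt_lagrangianDensity {σ t p' q' r' w' V' : ℝ} {V p q r w : ℝ → ℝ}
    (hV : HasDerivAt V V' (w t)) (hp : HasDerivAt p p' t) (hq : HasDerivAt q q' t)
    (hr : HasDerivAt r r' t) (hw : HasDerivAt w w' t) :
    HasDerivAt (fun t => p t * r t + (1/2) * (q t)^2 + (1/2) * σ * (p t)^2 - V (w t))
      (p' * r t + p t * r' + q t * q' + σ * p t * p' - V' * w') t := by
  refine ((((hp.mul hr).add ((hq.pow 2).const_mul (1/2))).add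
    ((hp.pow 2).const_mul ((1/2) * σ))).sub (hV.comp t hw)).congr_deriv ?_
  norm_num
  ring

theorem hasDerivAt_actionDensity {σ t p' q' r' w' : ℝ} {p q r w : ℝ → ℝ}
    (hp : HasDerivAt p p' t) (hq : HasDerivAt q q' t)
    (hr : HasDerivAt r r' t) (hw : HasDerivAt w w' t) :
    HasDerivAt (fun t => r t * w t + p t * q t + σ * p t * w t)
      (r' * w t + r t * w' + (p' * q t + p t * q') + (σ * p' * w t + σ * p t * w')) t :=
  ((hr.mul hw).add (hp.mul hq)).add ((hp.const_mul σ).mul hw)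

theorem action_conservation_law_general
    (σ : ℝ) (V Vp : ℝ → ℝ)
    (u ux uxx uxxx uxxxx us uxs uxxs uxxxs : ℝ → ℝ → ℝ)
    (hV : ∀ y, HasDerivAt V (Vp y) y)
    (hxx : ∀ x s, HasDerivAt (fun x' => ux x' s) (uxx x s) x)
    (hxxxx : ∀ x s, HasDerivAt (fun x' => uxxx x' s) (uxxxx x s) x)
    (hs : ∀ x s, HasDerivAt (fun s' => u x s') (us x s) s)
    (hxs : ∀ x s, HasDerivAt (fun s' => ux x s') (uxs x s) s)
    (hxxs : ∀ x s, HasDerivAt (fun s' => uxx x s') (uxxs x s) s)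
    (hxxxs : ∀ x s, HasDerivAt (fun s' => uxxx x s') (uxxxs x s) s)
    (hsx : ∀ x s, HasDerivAt (fun x' => us x' s) (uxs x s) x)
    (hxxsx : ∀ x s, HasDerivAt (fun x' => uxxs x' s) (uxxxs x s) x)
    (hODE : ∀ x s, uxxxx x s + σ * uxx x s + Vp (u x s) = 0) :
    ∀ x s : ℝ,
      deriv (fun s' => ux x s' * uxxx x s' + (1/2) * (uxx x s')^2
          + (1/2) * σ * (ux x s')^2 - V (u x s')) s
        = deriv (fun x' => uxxx x' s * us x' s + ux x' s * uxxs x' s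
          + σ * ux x' s * us x' s) x := by
  intro x s
  rw [(hasDerivAt_lagrangianDensity (hV _) (hxs x s) (hxxs x s) (hxxxs x s) (hs x s)).deriv,
    (hasDerivAt_actionDensity (hxx x s) (hxxsx x s) (hxxxx x s) (hsx x s)).deriv]
  linear_combination (-us x s) * hODE x s

/-- Action conservation law `∂L/∂s = ∂A/∂x` for an ensemble of solutions of
`u_xxxx + σ u_xx + V'(u) = 0`. -/
theorem action_conservation_law
    (σ : ℝ) (V Vp : ℝ → ℝ)
    (u ux uxx uxxx uxxxx us uxs uxxs uxxxs : ℝ → ℝ → ℝ)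
    (hV : ∀ y, HasDerivAt V (Vp y) y)
    (hx : ∀ x s, HasDerivAt (fun x' => u x' s) (ux x s) x)
    (hxx : ∀ x s, HasDerivAt (fun x' => ux x' s) (uxx x s) x)
    (hxxx : ∀ x s, HasDerivAt (fun x' => uxx x' s) (uxxx x s) x)
    (hxxxx : ∀ x s, HasDerivAt (fun x' => uxxx x' s) (uxxxx x s) x)
    (hs : ∀ x s, HasDerivAt (fun s' => u x s') (us x s) s)
    (hxs : ∀ x s, HasDerivAt (fun s' => ux x s') (uxs x s) s)
    (hxxs : ∀ x s, HasDerivAt (fun s' => uxx x s') (uxxs x s) s)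
    (hxxxs : ∀ x s, HasDerivAt (fun s' => uxxx x s') (uxxxs x s) s)
    (hsx : ∀ x s, HasDerivAt (fun x' => us x' s) (uxs x s) x)
    (hxxsx : ∀ x s, HasDerivAt (fun x' => uxxs x' s) (uxxxs x s) x)
    (hODE : ∀ x s, uxxxx x s + σ * uxx x s + Vp (u x s) = 0) :
    ∀ x s : ℝ,
      deriv (fun s' => ux x s' * uxxx x s' + (1/2) * (uxx x s')^2
          + (1/2) * σ * (ux x s')^2 - V (u x s')) s
        = deriv (fun x' => uxxx x' s * us x' s + ux x' s * uxxs x' s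
          + σ * ux x' s * us x' s) x :=
  action_conservation_law_general σ V Vp u ux uxx uxxx uxxxx us uxs uxxs uxxxs hV hxx hxxxx hs hxs
    hxxs hxxxs hsx hxxsx hODE
end

section
/- Let u : ℝ × ℝ → ℝ be smooth and 2π-periodic in s, satisfying for each s the ODE u_xxxx + σ u_xx + V'(u) = 0 in x. Then the integral ∮₀^{2π} (u_xxx u_s + u_x u_xxs + σ u_x u_s) ds is independent of x. -/
open Real

noncomputable def pdx (f : ℝ × ℝ → ℝ) : ℝ × ℝ → ℝ := fun p => fderiv ℝ f p (1, 0)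
noncomputable def pdy (f : ℝ × ℝ → ℝ) : ℝ × ℝ → ℝ := fun p => fderiv ℝ f p (0, 1)

lemma contDiff_pdx {f : ℝ × ℝ → ℝ} (hf : ContDiff ℝ (⊤ : ℕ∞) f) : ContDiff ℝ (⊤ : ℕ∞) (pdx f) :=
  (hf.fderiv_right (by simp)).clm_apply contDiff_const

lemma contDiff_pdy {f : ℝ × ℝ → ℝ} (hf : ContDiff ℝ (⊤ : ℕ∞) f) : ContDiff ℝ (⊤ : ℕ∞) (pdy f) :=
  (hf.fderiv_right (by simp)).clm_apply contDiff_const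

lemma hasDerivAt_slice_x {f : ℝ × ℝ → ℝ} (hf : ContDiff ℝ (⊤ : ℕ∞) f) (x s : ℝ) :
    HasDerivAt (fun x' => f (x', s)) (pdx f (x, s)) x :=
  ((hf.differentiable (by simp) (x, s)).hasFDerivAt).comp_hasDerivAt x
    (HasDerivAt.prodMk (hasDerivAt_id x) (hasDerivAt_const x s))

lemma hasDerivAt_slice_y {f : ℝ × ℝ → ℝ} (hf : ContDiff ℝ (⊤ : ℕ∞) f) (x s : ℝ) :
    HasDerivAt (fun s' => f (x, s')) (pdy f (x, s)) s :=
  ((hf.differentiable (by simp) (x, s)).hasFDerivAt).comp_hasDerivAt s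
    (HasDerivAt.prodMk (hasDerivAt_const s x) (hasDerivAt_id s))

lemma deriv_slice_x {f : ℝ × ℝ → ℝ} (hf : ContDiff ℝ (⊤ : ℕ∞) f) (x s : ℝ) :
    deriv (fun x' => f (x', s)) x = pdx f (x, s) := (hasDerivAt_slice_x hf x s).deriv

lemma deriv_slice_y {f : ℝ × ℝ → ℝ} (hf : ContDiff ℝ (⊤ : ℕ∞) f) (x s : ℝ) :
    deriv (fun s' => f (x, s')) s = pdy f (x, s) := (hasDerivAt_slice_y hf x s).deriv

lemma iteratedDeriv_slice {f : ℝ × ℝ → ℝ} (hf : ContDiff ℝ (⊤ : ℕ∞) f) (n : ℕ) (x s : ℝ) :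
    iteratedDeriv n (fun x' => f (x', s)) x = (pdx^[n] f) (x, s) := by
  induction n generalizing f with
  | zero => simp
  | succ n ih =>
    rw [iteratedDeriv_succ', Function.iterate_succ_apply]
    have : deriv (fun x' => f (x', s)) = fun x' => pdx f (x', s) := by
      funext x'; exact deriv_slice_x hf x' s
    rw [this]
    exact ih (contDiff_pdx hf)

lemma pdx_pdy_comm {f : ℝ × ℝ → ℝ} (hf : ContDiff ℝ (⊤ : ℕ∞) f) (p : ℝ × ℝ) :
    pdx (pdy f) p = pdy (pdx f) p := by
  have h1 : ∀ y, HasFDerivAt f (fderiv ℝ f y) y := fun y =>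
    (hf.differentiable (by simp) y).hasFDerivAt
  have h2 : HasFDerivAt (fderiv ℝ f) (fderiv ℝ (fderiv ℝ f) p) p :=
    (((hf.fderiv_right (m := (⊤ : ℕ∞)) (by simp)).differentiable (by simp)) p).hasFDerivAt
  have hx : pdx (pdy f) p = fderiv ℝ (fderiv ℝ f) p (1, 0) (0, 1) := by
    have h3 := (h2.clm_apply (hasFDerivAt_const ((0:ℝ),(1:ℝ)) p)).fderiv
    show fderiv ℝ (fun q => fderiv ℝ f q (0, 1)) p (1, 0) = _
    rw [h3]; simp
  have hy : pdy (pdx f) p = fderiv ℝ (fderiv ℝ f) p (0, 1) (1, 0) := by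
    have h3 := (h2.clm_apply (hasFDerivAt_const ((1:ℝ),(0:ℝ)) p)).fderiv
    show fderiv ℝ (fun q => fderiv ℝ f q (1, 0)) p (0, 1) = _
    rw [h3]; simp
  rw [hx, hy]
  exact second_derivative_symmetric h1 h2 _ _

lemma pdx_mul {f g : ℝ × ℝ → ℝ} (hf : ContDiff ℝ (⊤ : ℕ∞) f) (hg : ContDiff ℝ (⊤ : ℕ∞) g) (p : ℝ × ℝ) :
    pdx (fun q => f q * g q) p = pdx f p * g p + f p * pdx g p := by
  obtain ⟨x, s⟩ := p
  rw [← deriv_slice_x (hf.mul hg)]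
  exact ((hasDerivAt_slice_x hf x s).mul (hasDerivAt_slice_x hg x s)).deriv

lemma pdy_mul {f g : ℝ × ℝ → ℝ} (hf : ContDiff ℝ (⊤ : ℕ∞) f) (hg : ContDiff ℝ (⊤ : ℕ∞) g) (p : ℝ × ℝ) :
    pdy (fun q => f q * g q) p = pdy f p * g p + f p * pdy g p := by
  obtain ⟨x, s⟩ := p
  rw [← deriv_slice_y (hf.mul hg)]
  exact ((hasDerivAt_slice_y hf x s).mul (hasDerivAt_slice_y hg x s)).deriv

lemma pdx_add {f g : ℝ × ℝ → ℝ} (hf : ContDiff ℝ (⊤ : ℕ∞) f) (hg : ContDiff ℝ (⊤ : ℕ∞) g) (p : ℝ × ℝ) :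
    pdx (fun q => f q + g q) p = pdx f p + pdx g p := by
  obtain ⟨x, s⟩ := p
  rw [← deriv_slice_x (hf.add hg)]
  exact ((hasDerivAt_slice_x hf x s).add (hasDerivAt_slice_x hg x s)).deriv

lemma pdy_add {f g : ℝ × ℝ → ℝ} (hf : ContDiff ℝ (⊤ : ℕ∞) f) (hg : ContDiff ℝ (⊤ : ℕ∞) g) (p : ℝ × ℝ) :
    pdy (fun q => f q + g q) p = pdy f p + pdy g p := by
  obtain ⟨x, s⟩ := p
  rw [← deriv_slice_y (hf.add hg)]
  exact ((hasDerivAt_slice_y hf x s).add (hasDerivAt_slice_y hg x s)).deriv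

lemma pdx_const_mul {f : ℝ × ℝ → ℝ} (hf : ContDiff ℝ (⊤ : ℕ∞) f) (c : ℝ) (p : ℝ × ℝ) :
    pdx (fun q => c * f q) p = c * pdx f p := by
  obtain ⟨x, s⟩ := p
  rw [← deriv_slice_x (contDiff_const.mul hf)]
  exact ((hasDerivAt_slice_x hf x s).const_mul c).deriv

lemma pdy_const_mul {f : ℝ × ℝ → ℝ} (hf : ContDiff ℝ (⊤ : ℕ∞) f) (c : ℝ) (p : ℝ × ℝ) :
    pdy (fun q => c * f q) p = c * pdy f p := by
  obtain ⟨x, s⟩ := p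
  rw [← deriv_slice_y (contDiff_const.mul hf)]
  exact ((hasDerivAt_slice_y hf x s).const_mul c).deriv

lemma pdy_sub {f g : ℝ × ℝ → ℝ} (hf : ContDiff ℝ (⊤ : ℕ∞) f) (hg : ContDiff ℝ (⊤ : ℕ∞) g) (p : ℝ × ℝ) :
    pdy (fun q => f q - g q) p = pdy f p - pdy g p := by
  obtain ⟨x, s⟩ := p
  rw [← deriv_slice_y (hf.sub hg)]
  exact ((hasDerivAt_slice_y hf x s).sub (hasDerivAt_slice_y hg x s)).deriv

lemma pdy_comp {V : ℝ → ℝ} {f : ℝ × ℝ → ℝ} (hV : ContDiff ℝ (⊤ : ℕ∞) V) (hf : ContDiff ℝ (⊤ : ℕ∞) f)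
    (p : ℝ × ℝ) : pdy (fun q => V (f q)) p = deriv V (f p) * pdy f p := by
  obtain ⟨x, s⟩ := p
  have h1 := deriv_slice_y (f := fun q => V (f q)) (hV.comp hf) x s
  rw [← h1]
  exact (((hV.differentiable (by simp) (f (x, s))).hasDerivAt).comp s
    (hasDerivAt_slice_y hf x s)).deriv

lemma pdx_periodic {f : ℝ × ℝ → ℝ} (hf : ContDiff ℝ (⊤ : ℕ∞) f)
    (hper : ∀ x s, f (x, s + 2*π) = f (x, s)) :
    ∀ x s, pdx f (x, s + 2*π) = pdx f (x, s) := by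
  intro x s
  rw [← deriv_slice_x hf x (s + 2*π), ← deriv_slice_x hf x s]
  congr 1; funext x'; exact hper x' s

noncomputable def Afun (σ : ℝ) (u : ℝ × ℝ → ℝ) : ℝ × ℝ → ℝ :=
  fun p => pdx (pdx (pdx u)) p * pdy u p + pdx u p * pdy (pdx (pdx u)) p
    + σ * (pdx u p * pdy u p)

noncomputable def Bfun (σ : ℝ) (V : ℝ → ℝ) (u : ℝ × ℝ → ℝ) : ℝ × ℝ → ℝ :=
  fun p => pdx (pdx (pdx u)) p * pdx u p + (1/2) * (pdx (pdx u) p * pdx (pdx u) p)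
    + σ * ((1/2) * (pdx u p * pdx u p)) - V (u p)

lemma contDiff_Afun {σ : ℝ} {u : ℝ × ℝ → ℝ} (hu : ContDiff ℝ (⊤ : ℕ∞) u) :
    ContDiff ℝ (⊤ : ℕ∞) (Afun σ u) := by
  have h1 := contDiff_pdx hu
  have h2 := contDiff_pdx h1
  have h3 := contDiff_pdx h2
  exact ((h3.mul (contDiff_pdy hu)).add (h1.mul (contDiff_pdy h2))).add
    (contDiff_const.mul (h1.mul (contDiff_pdy hu)))

lemma contDiff_Bfun {σ : ℝ} {V : ℝ → ℝ} {u : ℝ × ℝ → ℝ} (hV : ContDiff ℝ (⊤ : ℕ∞) V)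
    (hu : ContDiff ℝ (⊤ : ℕ∞) u) : ContDiff ℝ (⊤ : ℕ∞) (Bfun σ V u) := by
  have h1 := contDiff_pdx hu
  have h2 := contDiff_pdx h1
  have h3 := contDiff_pdx h2
  exact (((h3.mul h1).add (contDiff_const.mul (h2.mul h2))).add
    (contDiff_const.mul (contDiff_const.mul (h1.mul h1)))).sub (hV.comp hu)

lemma Bfun_periodic {σ : ℝ} {V : ℝ → ℝ} {u : ℝ × ℝ → ℝ} (hu : ContDiff ℝ (⊤ : ℕ∞) u)
    (hper : ∀ x s, u (x, s + 2*π) = u (x, s)) (x s : ℝ) :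
    Bfun σ V u (x, s + 2*π) = Bfun σ V u (x, s) := by
  have h1 := pdx_periodic hu hper
  have h2 := pdx_periodic (contDiff_pdx hu) h1
  have h3 := pdx_periodic (contDiff_pdx (contDiff_pdx hu)) h2
  simp only [Bfun, h1, h2, h3, hper]

lemma key_identity {σ : ℝ} {V : ℝ → ℝ} {u : ℝ × ℝ → ℝ} (hV : ContDiff ℝ (⊤ : ℕ∞) V)
    (hu : ContDiff ℝ (⊤ : ℕ∞) u)
    (hODE : ∀ p, pdx (pdx (pdx (pdx u))) p + σ * pdx (pdx u) p + deriv V (u p) = 0)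
    (p : ℝ × ℝ) : pdx (Afun σ u) p = pdy (Bfun σ V u) p := by
  have h1 := contDiff_pdx hu
  have h2 := contDiff_pdx h1
  have h3 := contDiff_pdx h2
  have hyu := contDiff_pdy hu
  have hyu2 := contDiff_pdy h2
  -- expand pdx (Afun σ u) p
  have eA : pdx (Afun σ u) p =
      (pdx (pdx (pdx (pdx u))) p * pdy u p + pdx (pdx (pdx u)) p * pdx (pdy u) p
        + (pdx (pdx u) p * pdy (pdx (pdx u)) p + pdx u p * pdx (pdy (pdx (pdx u))) p))
      + σ * (pdx (pdx u) p * pdy u p + pdx u p * pdx (pdy u) p) := by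
    have e1 : pdx (Afun σ u) p =
        pdx (fun q => pdx (pdx (pdx u)) q * pdy u q + pdx u q * pdy (pdx (pdx u)) q) p
        + pdx (fun q => σ * (pdx u q * pdy u q)) p :=
      pdx_add ((h3.mul hyu).add (h1.mul hyu2)) (contDiff_const.mul (h1.mul hyu)) p
    have e2 : pdx (fun q => pdx (pdx (pdx u)) q * pdy u q + pdx u q * pdy (pdx (pdx u)) q) p
        = pdx (fun q => pdx (pdx (pdx u)) q * pdy u q) p
          + pdx (fun q => pdx u q * pdy (pdx (pdx u)) q) p :=
      pdx_add (h3.mul hyu) (h1.mul hyu2) p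
    have e3 : pdx (fun q => pdx (pdx (pdx u)) q * pdy u q) p
        = pdx (pdx (pdx (pdx u))) p * pdy u p + pdx (pdx (pdx u)) p * pdx (pdy u) p :=
      pdx_mul h3 hyu p
    have e4 : pdx (fun q => pdx u q * pdy (pdx (pdx u)) q) p
        = pdx (pdx u) p * pdy (pdx (pdx u)) p + pdx u p * pdx (pdy (pdx (pdx u))) p :=
      pdx_mul h1 hyu2 p
    have e5 : pdx (fun q => σ * (pdx u q * pdy u q)) p
        = σ * (pdx (pdx u) p * pdy u p + pdx u p * pdx (pdy u) p) := by
      rw [pdx_const_mul (h1.mul hyu) σ p, pdx_mul h1 hyu p]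
    rw [e1, e2, e3, e4, e5]
  -- expand pdy (Bfun σ V u) p
  have eB : pdy (Bfun σ V u) p =
      (pdy (pdx (pdx (pdx u))) p * pdx u p + pdx (pdx (pdx u)) p * pdy (pdx u) p
        + (1/2) * (pdy (pdx (pdx u)) p * pdx (pdx u) p + pdx (pdx u) p * pdy (pdx (pdx u)) p)
        + σ * ((1/2) * (pdy (pdx u) p * pdx u p + pdx u p * pdy (pdx u) p)))
      - deriv V (u p) * pdy u p := by
    have e1 : pdy (Bfun σ V u) p =
        pdy (fun q => pdx (pdx (pdx u)) q * pdx u q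
            + (1/2) * (pdx (pdx u) q * pdx (pdx u) q)
            + σ * ((1/2) * (pdx u q * pdx u q))) p
        - pdy (fun q => V (u q)) p :=
      pdy_sub (((h3.mul h1).add (contDiff_const.mul (h2.mul h2))).add
        (contDiff_const.mul (contDiff_const.mul (h1.mul h1)))) (hV.comp hu) p
    have e2 : pdy (fun q => pdx (pdx (pdx u)) q * pdx u q
            + (1/2) * (pdx (pdx u) q * pdx (pdx u) q)
            + σ * ((1/2) * (pdx u q * pdx u q))) p
        = pdy (fun q => pdx (pdx (pdx u)) q * pdx u q
            + (1/2) * (pdx (pdx u) q * pdx (pdx u) q)) p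
          + pdy (fun q => σ * ((1/2) * (pdx u q * pdx u q))) p :=
      pdy_add ((h3.mul h1).add (contDiff_const.mul (h2.mul h2)))
        (contDiff_const.mul (contDiff_const.mul (h1.mul h1))) p
    have e3 : pdy (fun q => pdx (pdx (pdx u)) q * pdx u q
            + (1/2) * (pdx (pdx u) q * pdx (pdx u) q)) p
        = pdy (fun q => pdx (pdx (pdx u)) q * pdx u q) p
          + pdy (fun q => (1/2) * (pdx (pdx u) q * pdx (pdx u) q)) p :=
      pdy_add (h3.mul h1) (contDiff_const.mul (h2.mul h2)) p
    have e4 : pdy (fun q => pdx (pdx (pdx u)) q * pdx u q) p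
        = pdy (pdx (pdx (pdx u))) p * pdx u p + pdx (pdx (pdx u)) p * pdy (pdx u) p :=
      pdy_mul h3 h1 p
    have e5 : pdy (fun q => (1/2) * (pdx (pdx u) q * pdx (pdx u) q)) p
        = (1/2) * (pdy (pdx (pdx u)) p * pdx (pdx u) p + pdx (pdx u) p * pdy (pdx (pdx u)) p) := by
      rw [pdy_const_mul (h2.mul h2) (1/2) p, pdy_mul h2 h2 p]
    have e6 : pdy (fun q => σ * ((1/2) * (pdx u q * pdx u q))) p
        = σ * ((1/2) * (pdy (pdx u) p * pdx u p + pdx u p * pdy (pdx u) p)) := by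
      rw [pdy_const_mul (contDiff_const.mul (h1.mul h1)) σ p,
        pdy_const_mul (h1.mul h1) (1/2) p, pdy_mul h1 h1 p]
    have e7 : pdy (fun q => V (u q)) p = deriv V (u p) * pdy u p := pdy_comp hV hu p
    rw [e1, e2, e3, e4, e5, e6, e7]
  have c1 : pdx (pdy u) p = pdy (pdx u) p := pdx_pdy_comm hu p
  have c2 : pdx (pdy (pdx (pdx u))) p = pdy (pdx (pdx (pdx u))) p := pdx_pdy_comm h2 p
  rw [eA, eB, c1, c2]
  linear_combination pdy u p * hODE p

/-- The action integral `∮ (u_xxx u_s + u_x u_xxs + σ u_x u_s) ds` over a period in `s`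
is independent of `x`, for an ensemble of `2π`-periodic (in `s`) solutions of
`u_xxxx + σ u_xx + V'(u) = 0`. -/
theorem action_integral_invariant
    (σ : ℝ) (V : ℝ → ℝ) (u : ℝ × ℝ → ℝ) (A : ℝ → ℝ → ℝ)
    (hV : ContDiff ℝ (⊤ : ℕ∞) V) (hu : ContDiff ℝ (⊤ : ℕ∞) u)
    (hper : ∀ x s : ℝ, u (x, s + 2*π) = u (x, s))
    (hODE : ∀ x s : ℝ, iteratedDeriv 4 (fun x' => u (x', s)) x
        + σ * iteratedDeriv 2 (fun x' => u (x', s)) x + deriv V (u (x, s)) = 0)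
    (hA : ∀ x s : ℝ, A x s =
        iteratedDeriv 3 (fun x' => u (x', s)) x * deriv (fun s' => u (x, s')) s
        + deriv (fun x' => u (x', s)) x
            * deriv (fun s' => iteratedDeriv 2 (fun x' => u (x', s')) x) s
        + σ * deriv (fun x' => u (x', s)) x * deriv (fun s' => u (x, s')) s) :
    ∀ x₁ x₂ : ℝ,
      (∫ s in (0:ℝ)..(2*π), A x₁ s) = ∫ s in (0:ℝ)..(2*π), A x₂ s := by
  have h1 := contDiff_pdx hu
  have h2 := contDiff_pdx h1
  have h3 := contDiff_pdx h2
  have hA' : ContDiff ℝ (⊤ : ℕ∞) (Afun σ u) := contDiff_Afun hu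
  have hB : ContDiff ℝ (⊤ : ℕ∞) (Bfun σ V u) := contDiff_Bfun hV hu
  have iter2 : pdx^[2] u = pdx (pdx u) := by
    rw [show (2:ℕ) = 1+1 from rfl, Function.iterate_succ_apply', Function.iterate_one]
  have iter3 : pdx^[3] u = pdx (pdx (pdx u)) := by
    rw [show (3:ℕ) = 2+1 from rfl, Function.iterate_succ_apply', iter2]
  have iter4 : pdx^[4] u = pdx (pdx (pdx (pdx u))) := by
    rw [show (4:ℕ) = 3+1 from rfl, Function.iterate_succ_apply', iter3]
  have hODE' : ∀ p : ℝ × ℝ,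
      pdx (pdx (pdx (pdx u))) p + σ * pdx (pdx u) p + deriv V (u p) = 0 := by
    rintro ⟨x, s⟩
    have h := hODE x s
    rwa [iteratedDeriv_slice hu 4 x s, iteratedDeriv_slice hu 2 x s, iter4, iter2] at h
  have hAeq : ∀ x s : ℝ, A x s = Afun σ u (x, s) := by
    intro x s
    have hs2 : (fun s' => iteratedDeriv 2 (fun x' => u (x', s')) x)
        = fun s' => pdx (pdx u) (x, s') := by
      funext s'; rw [iteratedDeriv_slice hu 2 x s', iter2]
    rw [hA x s, iteratedDeriv_slice hu 3 x s, iter3, deriv_slice_y hu x s,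
      deriv_slice_x hu x s, hs2, deriv_slice_y h2 x s]
    simp only [Afun]; ring
  have hzero : ∀ x₀ : ℝ, (∫ s in (0:ℝ)..(2*π), pdx (Afun σ u) (x₀, s)) = 0 := by
    intro x₀
    have hd : ∀ s ∈ Set.uIcc (0:ℝ) (2*π),
        HasDerivAt (fun s' => Bfun σ V u (x₀, s')) (pdx (Afun σ u) (x₀, s)) s := by
      intro s _
      rw [key_identity hV hu hODE' (x₀, s)]
      exact hasDerivAt_slice_y hB x₀ s
    have hcont : Continuous fun s => pdx (Afun σ u) (x₀, s) :=
      (contDiff_pdx hA').continuous.comp (Continuous.prodMk_right x₀)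
    rw [intervalIntegral.integral_eq_sub_of_hasDerivAt hd (hcont.intervalIntegrable 0 (2*π))]
    have hp := Bfun_periodic (σ := σ) (V := V) hu hper x₀ 0
    rw [zero_add] at hp
    rw [hp, sub_self]
  have hderiv : ∀ x₀ : ℝ, HasDerivAt (fun x => ∫ s in (0:ℝ)..(2*π), A x s) 0 x₀ := by
    intro x₀
    obtain ⟨C, hC⟩ := (isCompact_Icc.prod isCompact_uIcc :
        IsCompact (Set.Icc (x₀-1) (x₀+1) ×ˢ Set.uIcc (0:ℝ) (2*π))).exists_bound_of_continuousOn
      ((contDiff_pdx hA').continuous.continuousOn)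
    have main := intervalIntegral.hasDerivAt_integral_of_dominated_loc_of_deriv_le
      (F := fun x s => A x s) (F' := fun x s => pdx (Afun σ u) (x, s))
      (bound := fun _ => C) (a := 0) (b := 2*π) (x₀ := x₀) (s := Metric.ball x₀ 1)
      (μ := MeasureTheory.volume) (Metric.ball_mem_nhds x₀ one_pos)
      (Filter.Eventually.of_forall fun x => by
        show MeasureTheory.AEStronglyMeasurable (fun s => A x s) _
        simp only [hAeq]
        exact (hA'.continuous.comp (Continuous.prodMk_right x)).aestronglyMeasurable)
      (by
        show IntervalIntegrable (fun s => A x₀ s) _ _ _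
        simp only [hAeq]
        exact (hA'.continuous.comp (Continuous.prodMk_right x₀)).intervalIntegrable 0 (2*π))
      (((contDiff_pdx hA').continuous.comp (Continuous.prodMk_right x₀)).aestronglyMeasurable)
      (Filter.Eventually.of_forall fun s hs x hx => by
        refine hC (x, s) ⟨?_, Set.uIoc_subset_uIcc hs⟩
        have : |x - x₀| < 1 := by simpa [Real.dist_eq] using hx
        constructor <;> [linarith [abs_lt.mp this |>.1]; linarith [abs_lt.mp this |>.2]])
      (intervalIntegrable_const)
      (Filter.Eventually.of_forall fun s _ x _ => by
        show HasDerivAt (fun x => A x s) _ x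
        simp only [hAeq]
        exact hasDerivAt_slice_x hA' x s)
    have h0 := main.2
    rwa [hzero x₀] at h0
  exact fun x₁ x₂ => is_const_of_deriv_eq_zero
    (fun x => (hderiv x).differentiableAt) (fun x => (hderiv x).deriv) x₁ x₂
end

section
/- Let û(z,k) be a smooth family of 2π-periodic (in z) solutions of k⁴ û_zzzz + σ k² û_zz + V'(û) = 0. Define H(k) = (1/2π)∫₀^{2π} (−(3/2) k⁴ û_zz² + (1/2) σ k² û_z² + V(û)) dz and A(k) = (1/2π)∫₀^{2π} (σ k û_z² − 2 k³ û_zz²) dz. Then H_k(k) = k · A_k(k) for all k ≠ 0. -/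
open Real MeasureTheory intervalIntegral
open scoped ContDiff

lemma one_le_inf : (1 : WithTop ℕ∞) ≤ ∞ := by simp
lemma two_le_inf : (2 : WithTop ℕ∞) ≤ ∞ := by
  show ((2:ℕ∞) : WithTop ℕ∞) ≤ ((⊤:ℕ∞) : WithTop ℕ∞)
  exact WithTop.coe_le_coe.mpr le_top

noncomputable def Dv (v : ℝ × ℝ) (f : ℝ × ℝ → ℝ) (p : ℝ × ℝ) : ℝ := fderiv ℝ f p v

lemma Dv_contDiff {f : ℝ × ℝ → ℝ} (hf : ContDiff ℝ ∞ f) (v : ℝ × ℝ) :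
    ContDiff ℝ ∞ (Dv v f) :=
  (hf.fderiv_right (m := ∞) (by simp)).clm_apply contDiff_const

lemma hasDerivAt_slice1 {f : ℝ × ℝ → ℝ} (hf : ContDiff ℝ ∞ f) (z k : ℝ) :
    HasDerivAt (fun z' => f (z', k)) (Dv (1, 0) f (z, k)) z :=
  ((hf.differentiable (by simp) (z, k)).hasFDerivAt).comp_hasDerivAt z
    (HasDerivAt.prodMk (hasDerivAt_id z) (hasDerivAt_const z k))

lemma hasDerivAt_slice2 {f : ℝ × ℝ → ℝ} (hf : ContDiff ℝ ∞ f) (z k : ℝ) :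
    HasDerivAt (fun k' => f (z, k')) (Dv (0, 1) f (z, k)) k :=
  ((hf.differentiable (by simp) (z, k)).hasFDerivAt).comp_hasDerivAt k
    (HasDerivAt.prodMk (hasDerivAt_const k z) (hasDerivAt_id k))

lemma Dv_comm {f : ℝ × ℝ → ℝ} (hf : ContDiff ℝ ∞ f) (v w : ℝ × ℝ) :
    Dv v (Dv w f) = Dv w (Dv v f) := by
  funext p
  have hsym : IsSymmSndFDerivAt ℝ f p :=
    hf.contDiffAt.isSymmSndFDerivAt (by simpa [minSmoothness_of_isRCLikeNormedField] using two_le_inf)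
  have hd : DifferentiableAt ℝ (fderiv ℝ f) p :=
    ((hf.fderiv_right (m := ∞) (by simp)).differentiable (by simp)) p
  have key : ∀ u t : ℝ × ℝ, fderiv ℝ (fun q => fderiv ℝ f q u) p t
      = fderiv ℝ (fderiv ℝ f) p t u := by
    intro u t
    rw [fderiv_clm_apply hd (differentiableAt_const u)]
    simp
  show fderiv ℝ (fun q => fderiv ℝ f q w) p v = fderiv ℝ (fun q => fderiv ℝ f q v) p w
  rw [key, key, hsym v w]

lemma per_Dv {f : ℝ × ℝ → ℝ} (hf : ContDiff ℝ ∞ f)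
    (hp : ∀ p : ℝ × ℝ, f (p + (2 * π, 0)) = f p) (v : ℝ × ℝ) :
    ∀ p : ℝ × ℝ, Dv v f (p + (2 * π, 0)) = Dv v f p := by
  intro p
  have h : (f ∘ fun q : ℝ × ℝ => q + (2 * π, 0)) = f := funext hp
  have h1 : HasFDerivAt (f ∘ fun q : ℝ × ℝ => q + (2 * π, 0))
      ((fderiv ℝ f (p + (2 * π, 0))).comp (ContinuousLinearMap.id ℝ (ℝ × ℝ))) p :=
    ((hf.differentiable (by simp) _).hasFDerivAt).comp p
      ((hasFDerivAt_id p).add_const _)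
  rw [h] at h1
  have := h1.fderiv
  show fderiv ℝ f (p + (2 * π, 0)) v = fderiv ℝ f p v
  rw [this]; rfl

lemma cont_slice {f : ℝ × ℝ → ℝ} (hf : Continuous f) (k : ℝ) :
    Continuous fun z => f (z, k) :=
  hf.comp (continuous_id.prodMk continuous_const)

lemma hasDerivAt_param {F : ℝ × ℝ → ℝ} (hF : ContDiff ℝ ∞ F) (k₀ : ℝ) :
    HasDerivAt (fun k => ∫ z in (0:ℝ)..(2 * π), F (z, k))
      (∫ z in (0:ℝ)..(2 * π), Dv (0, 1) F (z, k₀)) k₀ := by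
  obtain ⟨C, hC⟩ : ∃ C, ∀ p ∈ (Set.uIcc (0:ℝ) (2 * π)) ×ˢ Metric.closedBall k₀ 1,
      ‖Dv (0, 1) F p‖ ≤ C :=
    (isCompact_uIcc.prod (isCompact_closedBall _ _)).exists_bound_of_continuousOn
      ((Dv_contDiff hF _).continuous.continuousOn)
  have hmeas : ∀ k : ℝ, AEStronglyMeasurable (fun z => F (z, k))
      (volume.restrict (Set.uIoc (0:ℝ) (2 * π))) :=
    fun k => (cont_slice hF.continuous k).aestronglyMeasurable
  have h := intervalIntegral.hasDerivAt_integral_of_dominated_loc_of_deriv_le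
    (F := fun k z => F (z, k)) (F' := fun k z => Dv (0, 1) F (z, k))
    (bound := fun _ => C) (μ := volume) (a := (0:ℝ)) (b := (2 * π)) (x₀ := k₀)
    (Metric.ball_mem_nhds k₀ zero_lt_one)
    (Filter.Eventually.of_forall fun k => hmeas k)
    ((cont_slice hF.continuous k₀).intervalIntegrable _ _)
    ((cont_slice (Dv_contDiff hF _).continuous k₀).aestronglyMeasurable)
    (Filter.Eventually.of_forall fun z hz x hx =>
      hC (z, x) ⟨Set.uIoc_subset_uIcc hz, Metric.ball_subset_closedBall hx⟩)
    (intervalIntegrable_const)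
    (Filter.Eventually.of_forall fun z _ x _ => hasDerivAt_slice2 hF z x)
  exact h.2

lemma ibp_periodic {f g f' g' : ℝ → ℝ}
    (hf : ∀ x, HasDerivAt f (f' x) x) (hg : ∀ x, HasDerivAt g (g' x) x)
    (hf' : Continuous f') (hg' : Continuous g')
    (hpf : f (2 * π) = f 0) (hpg : g (2 * π) = g 0) :
    ∫ x in (0:ℝ)..(2 * π), f' x * g x = -∫ x in (0:ℝ)..(2 * π), f x * g' x := by
  have hcf : Continuous f := Differentiable.continuous fun x => (hf x).differentiableAt
  have hcg : Continuous g := Differentiable.continuous fun x => (hg x).differentiableAt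
  have h := intervalIntegral.integral_deriv_mul_eq_sub_of_hasDerivAt
    (u := f) (v := g) (u' := f') (v' := g') (a := 0) (b := 2 * π)
    hcf.continuousOn hcg.continuousOn (fun x _ => hf x) (fun x _ => hg x)
    (hf'.intervalIntegrable _ _) (hg'.intervalIntegrable _ _)
  have hs : ∫ x in (0:ℝ)..(2 * π), (f' x * g x + f x * g' x) =
      (∫ x in (0:ℝ)..(2 * π), f' x * g x) + ∫ x in (0:ℝ)..(2 * π), f x * g' x :=
    intervalIntegral.integral_add ((hf'.mul hcg).intervalIntegrable _ _)
      ((hcf.mul hg').intervalIntegrable _ _)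
  rw [hpf, hpg, hs] at h
  linarith

/-- `H_k = k A_k` along a family of `2π`-periodic solutions of
`k⁴ û_zzzz + σ k² û_zz + V'(û) = 0`. -/
theorem Hk_eq_k_mul_Ak
    (σ : ℝ) (V : ℝ → ℝ) (uh : ℝ × ℝ → ℝ) (H A : ℝ → ℝ)
    (hV : ContDiff ℝ (⊤ : ℕ∞) V) (hu : ContDiff ℝ (⊤ : ℕ∞) uh)
    (hper : ∀ z k : ℝ, uh (z + 2*π, k) = uh (z, k))
    (hODE : ∀ z k : ℝ, k^4 * iteratedDeriv 4 (fun z' => uh (z', k)) z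
        + σ * k^2 * iteratedDeriv 2 (fun z' => uh (z', k)) z + deriv V (uh (z, k)) = 0)
    (hH : ∀ k : ℝ, H k = (1/(2*π)) * ∫ z in (0:ℝ)..(2*π),
        (-(3/2) * k^4 * (iteratedDeriv 2 (fun z' => uh (z', k)) z)^2
          + (1/2) * σ * k^2 * (deriv (fun z' => uh (z', k)) z)^2 + V (uh (z, k))))
    (hA : ∀ k : ℝ, A k = (1/(2*π)) * ∫ z in (0:ℝ)..(2*π),
        (σ * k * (deriv (fun z' => uh (z', k)) z)^2
          - 2 * k^3 * (iteratedDeriv 2 (fun z' => uh (z', k)) z)^2)) :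
    ∀ k : ℝ, k ≠ 0 → deriv H k = k * deriv A k := by
  have hu' : ContDiff ℝ ∞ uh := hu.of_le (by simp)
  have hV' : ContDiff ℝ ∞ V := hV.of_le (by simp)
  set uz := Dv (1,0) uh with uz_def
  set uzz := Dv (1,0) uz with uzz_def
  set uzzz := Dv (1,0) uzz with uzzz_def
  set uzzzz := Dv (1,0) uzzz with uzzzz_def
  set uk := Dv (0,1) uh with uk_def
  set ukz := Dv (1,0) uk with ukz_def
  set ukzz := Dv (1,0) ukz with ukzz_def
  have su1 : ContDiff ℝ ∞ uz := Dv_contDiff hu' _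
  have su2 : ContDiff ℝ ∞ uzz := Dv_contDiff su1 _
  have su3 : ContDiff ℝ ∞ uzzz := Dv_contDiff su2 _
  have su4 : ContDiff ℝ ∞ uzzzz := Dv_contDiff su3 _
  have sk0 : ContDiff ℝ ∞ uk := Dv_contDiff hu' _
  have sk1 : ContDiff ℝ ∞ ukz := Dv_contDiff sk0 _
  have sk2 : ContDiff ℝ ∞ ukzz := Dv_contDiff sk1 _
  -- slice identities
  have hs1 : ∀ z k : ℝ, deriv (fun z' => uh (z',k)) z = uz (z,k) :=
    fun z k => (hasDerivAt_slice1 hu' z k).deriv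
  have hf1 : ∀ k : ℝ, (deriv fun z' => uh (z',k)) = fun z' => uz (z',k) :=
    fun k => funext fun z => hs1 z k
  have hs2 : ∀ z k : ℝ, iteratedDeriv 2 (fun z' => uh (z',k)) z = uzz (z,k) := by
    intro z k
    rw [show (2:ℕ) = 1+1 from rfl, iteratedDeriv_succ, iteratedDeriv_one, hf1 k]
    exact (hasDerivAt_slice1 su1 z k).deriv
  have hf2 : ∀ k : ℝ, (iteratedDeriv 2 fun z' => uh (z',k)) = fun z' => uzz (z',k) :=
    fun k => funext fun z => hs2 z k
  have hs4 : ∀ z k : ℝ, iteratedDeriv 4 (fun z' => uh (z',k)) z = uzzzz (z,k) := by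
    intro z k
    rw [show (4:ℕ) = 2+1+1 from rfl, iteratedDeriv_succ, iteratedDeriv_succ, hf2 k]
    have e3 : (deriv fun z' => uzz (z',k)) = fun z' => uzzz (z',k) :=
      funext fun z' => (hasDerivAt_slice1 su2 z' k).deriv
    rw [e3]
    exact (hasDerivAt_slice1 su3 z k).deriv
  -- commutation of partial derivatives
  have hcz : Dv (0,1) uz = ukz := by
    rw [uz_def, ukz_def, uk_def]; exact Dv_comm hu' _ _
  have hczz : Dv (0,1) uzz = ukzz := by
    rw [uzz_def, ukzz_def, Dv_comm su1 (0,1) (1,0), hcz]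
  -- periodicity
  have pu : ∀ p : ℝ × ℝ, uh (p + (2*π, 0)) = uh p := by
    intro p
    have h : p + ((2*π : ℝ), (0:ℝ)) = (p.1 + 2*π, p.2) := by
      apply Prod.ext <;> simp
    rw [h]; exact hper p.1 p.2
  have puz : ∀ p : ℝ × ℝ, uz (p + (2*π, 0)) = uz p := per_Dv hu' pu _
  have puzz : ∀ p : ℝ × ℝ, uzz (p + (2*π, 0)) = uzz p := per_Dv su1 puz _
  have puzzz : ∀ p : ℝ × ℝ, uzzz (p + (2*π, 0)) = uzzz p := per_Dv su2 puzz _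
  have puk : ∀ p : ℝ × ℝ, uk (p + (2*π, 0)) = uk p := per_Dv hu' pu _
  have pukz : ∀ p : ℝ × ℝ, ukz (p + (2*π, 0)) = ukz p := per_Dv sk0 puk _
  have ep : ∀ f : ℝ × ℝ → ℝ, (∀ p : ℝ × ℝ, f (p + (2*π, 0)) = f p) →
      ∀ k0 : ℝ, f (2*π, k0) = f (0, k0) := by
    intro f hf k0
    have := hf (0, k0)
    simpa using this
  -- the ODE in terms of partial derivatives
  have hODEj : ∀ z k0 : ℝ, k0^4 * uzzzz (z,k0) + σ*k0^2*uzz (z,k0) + deriv V (uh (z,k0)) = 0 := by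
    intro z k0
    have h := hODE z k0
    rwa [hs4, hs2] at h
  -- integrands
  set FA : ℝ × ℝ → ℝ := fun p => σ * p.2 * (uz p)^2 - 2*p.2^3*(uzz p)^2 with FA_def
  set G : ℝ × ℝ → ℝ := fun p => (1/2)*p.2^4*(uzz p)^2 - (1/2)*σ*p.2^2*(uz p)^2 + V (uh p) with G_def
  have sFA : ContDiff ℝ ∞ FA :=
    ((contDiff_const.mul contDiff_snd).mul (su1.pow 2)).sub
      ((contDiff_const.mul (contDiff_snd.pow 3)).mul (su2.pow 2))
  have sG : ContDiff ℝ ∞ G :=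
    (((contDiff_const.mul (contDiff_snd.pow 4)).mul (su2.pow 2)).sub
      ((contDiff_const.mul (contDiff_snd.pow 2)).mul (su1.pow 2))).add (hV'.comp hu')
  set IA : ℝ → ℝ := fun k => ∫ z in (0:ℝ)..(2*π), FA (z,k) with IA_def
  set IG : ℝ → ℝ := fun k => ∫ z in (0:ℝ)..(2*π), G (z,k) with IG_def
  -- rewriting A and H
  have hA' : A = fun k => (1/(2*π)) * IA k := by
    funext k
    rw [hA k]
    congr 1
    apply intervalIntegral.integral_congr
    intro z _
    simp only [hs1, hs2, FA_def]
  have hH' : H = fun k => (1/(2*π)) * IG k + k * ((1/(2*π)) * IA k) := by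
    funext k
    rw [hH k]
    have h1 : Set.EqOn
        (fun z => -(3/2) * k^4 * (iteratedDeriv 2 (fun z' => uh (z', k)) z)^2
          + (1/2) * σ * k^2 * (deriv (fun z' => uh (z', k)) z)^2 + V (uh (z, k)))
        (fun z => G (z,k) + k * FA (z,k)) (Set.uIcc (0:ℝ) (2*π)) := by
      intro z _
      simp only [hs1, hs2, FA_def, G_def]
      ring
    rw [intervalIntegral.integral_congr h1,
      intervalIntegral.integral_add (g := fun z => k * FA (z,k))
        ((cont_slice sG.continuous k).intervalIntegrable _ _)
        ((continuous_const.mul (cont_slice sFA.continuous k)).intervalIntegrable _ _),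
      intervalIntegral.integral_const_mul]
    simp only [IA_def, IG_def]
    ring
  -- pointwise formula for the k-derivative of G
  have hDkG : ∀ z k0 : ℝ, Dv (0,1) G (z,k0) =
      -(FA (z,k0)) + (k0^4 * (uzz (z,k0) * ukzz (z,k0))
        - σ*k0^2*(uz (z,k0) * ukz (z,k0)) + deriv V (uh (z,k0)) * uk (z,k0)) := by
    intro z k0
    have huk : HasDerivAt (fun k' => uh (z,k')) (uk (z,k0)) k0 := hasDerivAt_slice2 hu' z k0
    have huzk : HasDerivAt (fun k' => uz (z,k')) (ukz (z,k0)) k0 := by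
      have h := hasDerivAt_slice2 su1 z k0
      rwa [hcz] at h
    have huzzk : HasDerivAt (fun k' => uzz (z,k')) (ukzz (z,k0)) k0 := by
      have h := hasDerivAt_slice2 su2 z k0
      rwa [hczz] at h
    have hVk : HasDerivAt (fun k' => V (uh (z,k'))) (deriv V (uh (z,k0)) * uk (z,k0)) k0 :=
      (((hV'.differentiable (by simp)) (uh (z,k0))).hasDerivAt).comp k0 huk
    have h1 : HasDerivAt (fun k' => (1/2)*k'^4 * (uzz (z,k'))^2)
        (((1/2) * ((4:ℕ) * k0^(4-1))) * (uzz (z,k0))^2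
          + ((1/2)*k0^4) * ((2:ℕ) * uzz (z,k0)^(2-1) * ukzz (z,k0))) k0 :=
      ((hasDerivAt_pow 4 k0).const_mul (1/2)).mul (huzzk.pow 2)
    have h2 : HasDerivAt (fun k' => (1/2)*σ*k'^2 * (uz (z,k'))^2)
        (((1/2)*σ * ((2:ℕ) * k0^(2-1))) * (uz (z,k0))^2
          + ((1/2)*σ*k0^2) * ((2:ℕ) * uz (z,k0)^(2-1) * ukz (z,k0))) k0 :=
      ((hasDerivAt_pow 2 k0).const_mul ((1/2)*σ)).mul (huzk.pow 2)
    have hG0 := (h1.sub h2).add hVk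
    have hval : (((1/2) * ((4:ℕ) * k0^(4-1))) * (uzz (z,k0))^2
          + ((1/2)*k0^4) * ((2:ℕ) * uzz (z,k0)^(2-1) * ukzz (z,k0)))
        - (((1/2)*σ * ((2:ℕ) * k0^(2-1))) * (uz (z,k0))^2
          + ((1/2)*σ*k0^2) * ((2:ℕ) * uz (z,k0)^(2-1) * ukz (z,k0)))
        + deriv V (uh (z,k0)) * uk (z,k0)
        = -(FA (z,k0)) + (k0^4 * (uzz (z,k0) * ukzz (z,k0))
          - σ*k0^2*(uz (z,k0) * ukz (z,k0)) + deriv V (uh (z,k0)) * uk (z,k0)) := by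
      simp only [FA_def]
      push_cast
      ring
    rw [hval] at hG0
    exact (hasDerivAt_slice2 sG z k0).unique hG0
  -- the key integral identity
  have key : ∀ k0 : ℝ, (∫ z in (0:ℝ)..(2*π), Dv (0,1) G (z,k0)) = - IA k0 := by
    intro k0
    -- integration by parts
    have e2 : ∫ z in (0:ℝ)..(2*π), uzz (z,k0) * uk (z,k0)
        = -∫ z in (0:ℝ)..(2*π), uz (z,k0) * ukz (z,k0) :=
      ibp_periodic (fun z => hasDerivAt_slice1 su1 z k0) (fun z => hasDerivAt_slice1 sk0 z k0)
        (cont_slice su2.continuous k0) (cont_slice sk1.continuous k0)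
        (ep uz puz k0) (ep uk puk k0)
    have e1a : ∫ z in (0:ℝ)..(2*π), uzzz (z,k0) * ukz (z,k0)
        = -∫ z in (0:ℝ)..(2*π), uzz (z,k0) * ukzz (z,k0) :=
      ibp_periodic (fun z => hasDerivAt_slice1 su2 z k0) (fun z => hasDerivAt_slice1 sk1 z k0)
        (cont_slice su3.continuous k0) (cont_slice sk2.continuous k0)
        (ep uzz puzz k0) (ep ukz pukz k0)
    have e1b : ∫ z in (0:ℝ)..(2*π), uzzzz (z,k0) * uk (z,k0)
        = -∫ z in (0:ℝ)..(2*π), uzzz (z,k0) * ukz (z,k0) :=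
      ibp_periodic (fun z => hasDerivAt_slice1 su3 z k0) (fun z => hasDerivAt_slice1 sk0 z k0)
        (cont_slice su4.continuous k0) (cont_slice sk1.continuous k0)
        (ep uzzz puzzz k0) (ep uk puk k0)
    -- integrabilities
    have iic : ∀ F : ℝ → ℝ, Continuous F → IntervalIntegrable F volume 0 (2*π) :=
      fun F hF => hF.intervalIntegrable _ _
    have cVd : Continuous fun p : ℝ × ℝ => deriv V (uh p) :=
      (hV'.continuous_deriv one_le_inf).comp hu'.continuous
    have cu1 : Continuous uz := su1.continuous
    have cu2 : Continuous uzz := su2.continuous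
    have cu3 : Continuous uzzz := su3.continuous
    have cu4 : Continuous uzzzz := su4.continuous
    have ck0 : Continuous uk := sk0.continuous
    have ck1 : Continuous ukz := sk1.continuous
    have ck2 : Continuous ukzz := sk2.continuous
    have cFA : Continuous FA := sFA.continuous
    have cdV : Continuous (deriv V) := hV'.continuous_deriv one_le_inf
    have cuh : Continuous uh := hu'.continuous
    -- pointwise vanishing from the ODE
    have hpt : ∀ z : ℝ, k0^4*(uzzzz (z,k0) * uk (z,k0))
        + (σ*k0^2*(uzz (z,k0) * uk (z,k0)) + deriv V (uh (z,k0)) * uk (z,k0)) = 0 := by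
      intro z
      have h := hODEj z k0
      calc k0^4*(uzzzz (z,k0) * uk (z,k0))
            + (σ*k0^2*(uzz (z,k0) * uk (z,k0)) + deriv V (uh (z,k0)) * uk (z,k0))
          = (k0^4 * uzzzz (z,k0) + σ*k0^2*uzz (z,k0) + deriv V (uh (z,k0))) * uk (z,k0) := by
            ring
        _ = 0 := by rw [h, zero_mul]
    have zero2 : (∫ z in (0:ℝ)..(2*π), (k0^4*(uzzzz (z,k0) * uk (z,k0))
        + (σ*k0^2*(uzz (z,k0) * uk (z,k0)) + deriv V (uh (z,k0)) * uk (z,k0)))) = 0 := by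
      simp only [hpt]
      simp
    have split2 : (∫ z in (0:ℝ)..(2*π), (k0^4*(uzzzz (z,k0) * uk (z,k0))
        + (σ*k0^2*(uzz (z,k0) * uk (z,k0)) + deriv V (uh (z,k0)) * uk (z,k0))))
        = k0^4 * (∫ z in (0:ℝ)..(2*π), uzzzz (z,k0) * uk (z,k0))
          + (σ*k0^2 * (∫ z in (0:ℝ)..(2*π), uzz (z,k0) * uk (z,k0))
            + ∫ z in (0:ℝ)..(2*π), deriv V (uh (z,k0)) * uk (z,k0)) := by
      rw [intervalIntegral.integral_add (iic _ (by fun_prop)) (iic _ (by fun_prop)),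
        intervalIntegral.integral_add (iic _ (by fun_prop)) (iic _ (by fun_prop)),
        intervalIntegral.integral_const_mul, intervalIntegral.integral_const_mul]
    have hzero : (∫ z in (0:ℝ)..(2*π),
        (k0^4 * (uzz (z,k0) * ukzz (z,k0)) - σ*k0^2*(uz (z,k0) * ukz (z,k0))
          + deriv V (uh (z,k0)) * uk (z,k0))) = 0 := by
      have splitQ : (∫ z in (0:ℝ)..(2*π),
          (k0^4 * (uzz (z,k0) * ukzz (z,k0)) - σ*k0^2*(uz (z,k0) * ukz (z,k0))
            + deriv V (uh (z,k0)) * uk (z,k0)))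
          = k0^4 * (∫ z in (0:ℝ)..(2*π), uzz (z,k0) * ukzz (z,k0))
            - σ*k0^2 * (∫ z in (0:ℝ)..(2*π), uz (z,k0) * ukz (z,k0))
            + ∫ z in (0:ℝ)..(2*π), deriv V (uh (z,k0)) * uk (z,k0) := by
        rw [intervalIntegral.integral_add (iic _ (by fun_prop)) (iic _ (by fun_prop)),
          intervalIntegral.integral_sub (iic _ (by fun_prop)) (iic _ (by fun_prop)),
          intervalIntegral.integral_const_mul, intervalIntegral.integral_const_mul]
      have eA : (∫ z in (0:ℝ)..(2*π), uzz (z,k0) * ukzz (z,k0))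
          = ∫ z in (0:ℝ)..(2*π), uzzzz (z,k0) * uk (z,k0) := by
        rw [e1b, e1a]; ring
      have eB : (∫ z in (0:ℝ)..(2*π), uz (z,k0) * ukz (z,k0))
          = -∫ z in (0:ℝ)..(2*π), uzz (z,k0) * uk (z,k0) := by
        rw [e2]; ring
      rw [splitQ, eA, eB]
      rw [split2] at zero2
      linarith
    -- assemble
    have hsplit : (∫ z in (0:ℝ)..(2*π), Dv (0,1) G (z,k0))
        = (∫ z in (0:ℝ)..(2*π), -(FA (z,k0)))
          + ∫ z in (0:ℝ)..(2*π), (k0^4 * (uzz (z,k0) * ukzz (z,k0))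
            - σ*k0^2*(uz (z,k0) * ukz (z,k0)) + deriv V (uh (z,k0)) * uk (z,k0)) := by
      rw [← intervalIntegral.integral_add (iic _ (by fun_prop)) (iic _ (by fun_prop))]
      apply intervalIntegral.integral_congr
      intro z _
      exact hDkG z k0
    rw [hsplit, hzero, add_zero, intervalIntegral.integral_neg]
  -- derivatives of IA and IG
  have dIA : ∀ k0 : ℝ, HasDerivAt IA (∫ z in (0:ℝ)..(2*π), Dv (0,1) FA (z,k0)) k0 :=
    fun k0 => hasDerivAt_param sFA k0
  have dIG : ∀ k0 : ℝ, HasDerivAt IG (- IA k0) k0 := by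
    intro k0
    have h := hasDerivAt_param sG k0
    rwa [key k0] at h
  -- conclusion
  intro k _
  have hAder : HasDerivAt A ((1/(2*π)) * ∫ z in (0:ℝ)..(2*π), Dv (0,1) FA (z,k)) k := by
    rw [hA']
    exact (dIA k).const_mul _
  have hHder : HasDerivAt H (k * ((1/(2*π)) * ∫ z in (0:ℝ)..(2*π), Dv (0,1) FA (z,k))) k := by
    rw [hH']
    have h1 : HasDerivAt (fun k' => (1/(2*π)) * IG k') ((1/(2*π)) * (- IA k)) k :=
      (dIG k).const_mul _
    have h2 : HasDerivAt (fun k' => k' * ((1/(2*π)) * IA k'))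
        (1 * ((1/(2*π)) * IA k)
          + k * ((1/(2*π)) * ∫ z in (0:ℝ)..(2*π), Dv (0,1) FA (z,k))) k :=
      (hasDerivAt_id k).mul ((dIA k).const_mul _)
    have h3 := h1.add h2
    have hval : (1/(2*π)) * (- IA k) + (1 * ((1/(2*π)) * IA k)
          + k * ((1/(2*π)) * ∫ z in (0:ℝ)..(2*π), Dv (0,1) FA (z,k)))
        = k * ((1/(2*π)) * ∫ z in (0:ℝ)..(2*π), Dv (0,1) FA (z,k)) := by ring
    rwa [hval] at h3
  rw [hHder.deriv, hAder.deriv]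
end

section
/- Let û(z,k) be a smooth family of 2π-periodic solutions of k⁴ û_zzzz + σ k² û_zz + V'(û) = 0, with ξ₁ = û_z and ξ₂ = û_k. Then the solvability quantity ⟨⟨û_z, −(4k³ ∂_z³ û_k + 2σk ∂_z û_k) − 6k² ∂_z² û_z − σ û_z⟩⟩ equals −A_k(k), where A(k) = (1/2π)∫₀^{2π}(σ k û_z² − 2k³ û_zz²) dz. In particular the Jordan chain at λ = 0 extends to length three if and only if A_k(k) = 0. -/
open Real MeasureTheory intervalIntegral

namespace JordanAux

noncomputable def pd (v : ℝ × ℝ) (f : ℝ × ℝ → ℝ) : ℝ × ℝ → ℝ := fun p => fderiv ℝ f p v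

variable {f : ℝ × ℝ → ℝ}

lemma pd_contDiff (hf : ContDiff ℝ (⊤ : ℕ∞) f) (v : ℝ × ℝ) : ContDiff ℝ (⊤ : ℕ∞) (pd v f) :=
  (hf.fderiv_right (by simp)).clm_apply contDiff_const

lemma hasDerivAt_slice_z (hf : ContDiff ℝ (⊤ : ℕ∞) f) (z k : ℝ) :
    HasDerivAt (fun z' => f (z', k)) (pd (1, 0) f (z, k)) z := by
  have h1 : HasDerivAt (fun z' : ℝ => ((z' : ℝ), k)) (((1 : ℝ), (0 : ℝ))) z :=
    (hasDerivAt_id z).prodMk (hasDerivAt_const z k)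
  exact (hf.differentiable (by simp) (z, k)).hasFDerivAt.comp_hasDerivAt z h1

lemma hasDerivAt_slice_k (hf : ContDiff ℝ (⊤ : ℕ∞) f) (z k : ℝ) :
    HasDerivAt (fun k' => f (z, k')) (pd (0, 1) f (z, k)) k := by
  have h1 : HasDerivAt (fun k' : ℝ => (z, (k' : ℝ))) (((0 : ℝ), (1 : ℝ))) k :=
    (hasDerivAt_const k z).prodMk (hasDerivAt_id k)
  exact (hf.differentiable (by simp) (z, k)).hasFDerivAt.comp_hasDerivAt k h1

lemma deriv_slice_z (hf : ContDiff ℝ (⊤ : ℕ∞) f) (z k : ℝ) :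
    deriv (fun z' => f (z', k)) z = pd (1, 0) f (z, k) :=
  (hasDerivAt_slice_z hf z k).deriv

lemma deriv_slice_k (hf : ContDiff ℝ (⊤ : ℕ∞) f) (z k : ℝ) :
    deriv (fun k' => f (z, k')) k = pd (0, 1) f (z, k) :=
  (hasDerivAt_slice_k hf z k).deriv

lemma iteratedDeriv_slice_succ (hf : ContDiff ℝ (⊤ : ℕ∞) f) (n : ℕ) (k : ℝ) :
    iteratedDeriv (n + 1) (fun z' => f (z', k)) =
      iteratedDeriv n (fun z' => pd (1, 0) f (z', k)) := by
  rw [iteratedDeriv_succ']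
  have h : (deriv fun z' => f (z', k)) = fun z' => pd (1, 0) f (z', k) :=
    funext fun z' => deriv_slice_z hf z' k
  rw [h]

lemma iteratedDeriv_two_slice (hf : ContDiff ℝ (⊤ : ℕ∞) f) (z k : ℝ) :
    iteratedDeriv 2 (fun z' => f (z', k)) z = pd (1, 0) (pd (1, 0) f) (z, k) := by
  rw [show (2 : ℕ) = 1 + 1 from rfl, iteratedDeriv_slice_succ hf 1 k,
    show (1 : ℕ) = 0 + 1 from rfl, iteratedDeriv_slice_succ (pd_contDiff hf _) 0 k,
    iteratedDeriv_zero]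

lemma iteratedDeriv_three_slice (hf : ContDiff ℝ (⊤ : ℕ∞) f) (z k : ℝ) :
    iteratedDeriv 3 (fun z' => f (z', k)) z =
      pd (1, 0) (pd (1, 0) (pd (1, 0) f)) (z, k) := by
  rw [show (3 : ℕ) = 2 + 1 from rfl, iteratedDeriv_slice_succ hf 2 k]
  exact iteratedDeriv_two_slice (pd_contDiff hf _) z k

lemma pd_comm (hf : ContDiff ℝ (⊤ : ℕ∞) f) (v w : ℝ × ℝ) (q : ℝ × ℝ) :
    pd w (pd v f) q = pd v (pd w f) q := by
  have hd : DifferentiableAt ℝ (fderiv ℝ f) q :=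
    (hf.fderiv_right (m := (⊤ : ℕ∞)) (by simp)).differentiable (by simp) q
  have key : ∀ v w : ℝ × ℝ, pd w (pd v f) q = fderiv ℝ (fderiv ℝ f) q w v := by
    intro v w
    have h2 : HasFDerivAt (fun p => fderiv ℝ f p v)
        ((ContinuousLinearMap.apply ℝ ℝ v).comp (fderiv ℝ (fderiv ℝ f) q)) q :=
      (ContinuousLinearMap.apply ℝ ℝ v).hasFDerivAt.comp q hd.hasFDerivAt
    calc pd w (pd v f) q = fderiv ℝ (fun p => fderiv ℝ f p v) q w := rfl
      _ = ((ContinuousLinearMap.apply ℝ ℝ v).comp (fderiv ℝ (fderiv ℝ f) q)) w := by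
          rw [h2.fderiv]
      _ = fderiv ℝ (fderiv ℝ f) q w v := rfl
  have hs : IsSymmSndFDerivAt ℝ f q := hf.contDiffAt.isSymmSndFDerivAt (by rw [minSmoothness_of_isRCLikeNormedField]; exact WithTop.coe_le_coe.mpr le_top)
  rw [key v w, key w v, hs w v]

lemma pd_periodic (hf : ContDiff ℝ (⊤ : ℕ∞) f) (hp : ∀ p : ℝ × ℝ, f (p + (2 * π, 0)) = f p)
    (v : ℝ × ℝ) (p : ℝ × ℝ) : pd v f (p + (2 * π, 0)) = pd v f p := by
  set c : ℝ × ℝ := (2 * π, 0) with hc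
  have h1 : HasFDerivAt (fun p' => f (p' + c)) (fderiv ℝ f (p + c)) p := by
    have h0 := (hf.differentiable (by simp) (p + c)).hasFDerivAt
    have hid : HasFDerivAt (fun p' : ℝ × ℝ => p' + c) (ContinuousLinearMap.id ℝ (ℝ × ℝ)) p :=
      (hasFDerivAt_id p).add_const c
    simpa [Function.comp_def] using h0.comp p hid
  have h2 : HasFDerivAt f (fderiv ℝ f (p + c)) p := by
    have he : (fun p' => f (p' + c)) = f := funext hp
    rwa [he] at h1
  have h3 := h2.fderiv
  show fderiv ℝ f (p + c) v = fderiv ℝ f p v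
  rw [h3]

lemma hasDerivAt_param_integral {F : ℝ × ℝ → ℝ} (hF : ContDiff ℝ (⊤ : ℕ∞) F) (a b k : ℝ) :
    HasDerivAt (fun k' => ∫ z in a..b, F (z, k'))
      (∫ z in a..b, pd (0, 1) F (z, k)) k := by
  obtain ⟨C, hC⟩ : ∃ C, ∀ p ∈ Set.uIcc a b ×ˢ Metric.closedBall k 1, ‖pd (0, 1) F p‖ ≤ C :=
    (isCompact_uIcc.prod (isCompact_closedBall k 1)).exists_bound_of_continuousOn
      (pd_contDiff hF (0, 1)).continuous.continuousOn
  have cont : ∀ k' : ℝ, Continuous fun z => F (z, k') := fun k' =>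
    hF.continuous.comp (continuous_id.prodMk continuous_const)
  have contd : Continuous fun z => pd (0, 1) F (z, k) :=
    (pd_contDiff hF (0, 1)).continuous.comp (continuous_id.prodMk continuous_const)
  have H := intervalIntegral.hasDerivAt_integral_of_dominated_loc_of_deriv_le
    (F := fun x t => F (t, x)) (F' := fun x t => pd (0, 1) F (t, x)) (bound := fun _ => C)
    (μ := volume) (a := a) (b := b) (x₀ := k) (s := Metric.ball k 1) (Metric.ball_mem_nhds k one_pos)
    (Filter.Eventually.of_forall fun x => (cont x).aestronglyMeasurable)
    ((cont k).intervalIntegrable a b)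
    contd.aestronglyMeasurable
    (Filter.Eventually.of_forall fun t ht x hx =>
      hC (t, x) ⟨Set.uIoc_subset_uIcc ht, Metric.ball_subset_closedBall hx⟩)
    intervalIntegrable_const
    (Filter.Eventually.of_forall fun t ht x hx => hasDerivAt_slice_k hF t x)
  exact H.2



lemma expand4 (c1 c2 c3 c4 : ℝ) {f1 f2 f3 f4 : ℝ → ℝ} (h1 : Continuous f1)
    (h2 : Continuous f2) (h3 : Continuous f3) (h4 : Continuous f4) :
    (∫ z in (0:ℝ)..(2*π), (c1 * f1 z + c2 * f2 z + c3 * f3 z + c4 * f4 z))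
      = c1 * (∫ z in (0:ℝ)..(2*π), f1 z) + c2 * (∫ z in (0:ℝ)..(2*π), f2 z)
        + c3 * (∫ z in (0:ℝ)..(2*π), f3 z) + c4 * (∫ z in (0:ℝ)..(2*π), f4 z) := by
  have i1 : IntervalIntegrable (fun z => c1 * f1 z) MeasureTheory.volume (0:ℝ) (2*π) := (continuous_const.mul h1).intervalIntegrable (0:ℝ) (2*π)
  have i2 : IntervalIntegrable (fun z => c2 * f2 z) MeasureTheory.volume (0:ℝ) (2*π) := (continuous_const.mul h2).intervalIntegrable (0:ℝ) (2*π)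
  have i3 : IntervalIntegrable (fun z => c3 * f3 z) MeasureTheory.volume (0:ℝ) (2*π) := (continuous_const.mul h3).intervalIntegrable (0:ℝ) (2*π)
  have i4 : IntervalIntegrable (fun z => c4 * f4 z) MeasureTheory.volume (0:ℝ) (2*π) := (continuous_const.mul h4).intervalIntegrable (0:ℝ) (2*π)
  rw [integral_add ((i1.add i2).add i3) i4, integral_add (i1.add i2) i3,
    integral_add i1 i2, intervalIntegral.integral_const_mul, intervalIntegral.integral_const_mul, intervalIntegral.integral_const_mul,
    intervalIntegral.integral_const_mul]

lemma key_calc (σ k : ℝ) {u : ℝ × ℝ → ℝ} (hu : ContDiff ℝ (⊤ : ℕ∞) u)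
    (hp : ∀ p : ℝ × ℝ, u (p + (2 * π, 0)) = u p) :
    (∫ z in (0:ℝ)..(2*π), pd (1,0) u (z,k) *
        (-(4*k^3 * pd (1,0) (pd (1,0) (pd (1,0) (pd (0,1) u))) (z,k)
            + 2*σ*k * pd (1,0) (pd (0,1) u) (z,k))
          - 6*k^2 * pd (1,0) (pd (1,0) (pd (1,0) u)) (z,k)
          - σ * pd (1,0) u (z,k)))
      = -(∫ z in (0:ℝ)..(2*π),
          (σ * (pd (1,0) u (z,k))^2
           + 2*σ*k * (pd (1,0) u (z,k) * pd (1,0) (pd (0,1) u) (z,k))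
           - 6*k^2 * (pd (1,0) (pd (1,0) u) (z,k))^2
           - 4*k^3 * (pd (1,0) (pd (1,0) u) (z,k) * pd (1,0) (pd (1,0) (pd (0,1) u)) (z,k)))) := by
  have ca : ContDiff ℝ (⊤ : ℕ∞) (pd (1,0) u) := pd_contDiff hu _
  have cb : ContDiff ℝ (⊤ : ℕ∞) (pd (1,0) (pd (1,0) u)) := pd_contDiff ca _
  have cb3 : ContDiff ℝ (⊤ : ℕ∞) (pd (1,0) (pd (1,0) (pd (1,0) u))) := pd_contDiff cb _
  have cw : ContDiff ℝ (⊤ : ℕ∞) (pd (0,1) u) := pd_contDiff hu _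
  have cw1 : ContDiff ℝ (⊤ : ℕ∞) (pd (1,0) (pd (0,1) u)) := pd_contDiff cw _
  have cw2 : ContDiff ℝ (⊤ : ℕ∞) (pd (1,0) (pd (1,0) (pd (0,1) u))) := pd_contDiff cw1 _
  have cw3 : ContDiff ℝ (⊤ : ℕ∞) (pd (1,0) (pd (1,0) (pd (1,0) (pd (0,1) u)))) := pd_contDiff cw2 _
  have cs : ∀ {g : ℝ × ℝ → ℝ}, ContDiff ℝ (⊤ : ℕ∞) g → Continuous fun z => g (z,k) := fun hg =>
    hg.continuous.comp (continuous_id.prodMk continuous_const)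
  have pa := pd_periodic hu hp (1,0)
  have pb := pd_periodic ca pa (1,0)
  have pw := pd_periodic hu hp (0,1)
  have pw1 := pd_periodic cw pw (1,0)
  have pw2 := pd_periodic cw1 pw1 (1,0)
  have per : ∀ {g : ℝ × ℝ → ℝ}, (∀ p, g (p + (2*π,0)) = g p) → g (2*π, k) = g (0, k) := by
    intro g hg
    simpa using hg (0, k)
  have I1 : (∫ z in (0:ℝ)..(2*π),
        pd (1,0) u (z,k) * pd (1,0) (pd (1,0) (pd (1,0) (pd (0,1) u))) (z,k))
      = -(∫ z in (0:ℝ)..(2*π),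
        pd (1,0) (pd (1,0) u) (z,k) * pd (1,0) (pd (1,0) (pd (0,1) u)) (z,k)) := by
    have h := intervalIntegral.integral_mul_deriv_eq_deriv_mul
      (u := fun z => pd (1,0) u (z,k)) (u' := fun z => pd (1,0) (pd (1,0) u) (z,k))
      (v := fun z => pd (1,0) (pd (1,0) (pd (0,1) u)) (z,k))
      (v' := fun z => pd (1,0) (pd (1,0) (pd (1,0) (pd (0,1) u))) (z,k))
      (fun x _ => hasDerivAt_slice_z ca x k) (fun x _ => hasDerivAt_slice_z cw2 x k)
      ((cs cb).intervalIntegrable 0 (2*π)) ((cs cw3).intervalIntegrable 0 (2*π))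
    beta_reduce at h
    rw [h, per pa, per pw2]; ring
  have I2 : (∫ z in (0:ℝ)..(2*π),
        pd (1,0) u (z,k) * pd (1,0) (pd (1,0) (pd (1,0) u)) (z,k))
      = -(∫ z in (0:ℝ)..(2*π),
        pd (1,0) (pd (1,0) u) (z,k) * pd (1,0) (pd (1,0) u) (z,k)) := by
    have h := intervalIntegral.integral_mul_deriv_eq_deriv_mul
      (u := fun z => pd (1,0) u (z,k)) (u' := fun z => pd (1,0) (pd (1,0) u) (z,k))
      (v := fun z => pd (1,0) (pd (1,0) u) (z,k))
      (v' := fun z => pd (1,0) (pd (1,0) (pd (1,0) u)) (z,k))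
      (fun x _ => hasDerivAt_slice_z ca x k) (fun x _ => hasDerivAt_slice_z cb x k)
      ((cs cb).intervalIntegrable 0 (2*π)) ((cs cb3).intervalIntegrable 0 (2*π))
    beta_reduce at h
    rw [h, per pa, per pb]; ring
  have hL : (∫ z in (0:ℝ)..(2*π), pd (1,0) u (z,k) *
        (-(4*k^3 * pd (1,0) (pd (1,0) (pd (1,0) (pd (0,1) u))) (z,k)
            + 2*σ*k * pd (1,0) (pd (0,1) u) (z,k))
          - 6*k^2 * pd (1,0) (pd (1,0) (pd (1,0) u)) (z,k)
          - σ * pd (1,0) u (z,k)))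
      = (-(4*k^3)) * (∫ z in (0:ℝ)..(2*π),
            pd (1,0) u (z,k) * pd (1,0) (pd (1,0) (pd (1,0) (pd (0,1) u))) (z,k))
        + (-(2*σ*k)) * (∫ z in (0:ℝ)..(2*π),
            pd (1,0) u (z,k) * pd (1,0) (pd (0,1) u) (z,k))
        + (-(6*k^2)) * (∫ z in (0:ℝ)..(2*π),
            pd (1,0) u (z,k) * pd (1,0) (pd (1,0) (pd (1,0) u)) (z,k))
        + (-σ) * (∫ z in (0:ℝ)..(2*π), pd (1,0) u (z,k) * pd (1,0) u (z,k)) := by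
    rw [integral_congr (g := fun z =>
        (-(4*k^3)) * (pd (1,0) u (z,k) * pd (1,0) (pd (1,0) (pd (1,0) (pd (0,1) u))) (z,k))
        + (-(2*σ*k)) * (pd (1,0) u (z,k) * pd (1,0) (pd (0,1) u) (z,k))
        + (-(6*k^2)) * (pd (1,0) u (z,k) * pd (1,0) (pd (1,0) (pd (1,0) u)) (z,k))
        + (-σ) * (pd (1,0) u (z,k) * pd (1,0) u (z,k))) (fun z _ => by ring)]
    exact expand4 _ _ _ _ ((cs ca).mul (cs cw3)) ((cs ca).mul (cs cw1))
      ((cs ca).mul (cs cb3)) ((cs ca).mul (cs ca))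
  have hR : (∫ z in (0:ℝ)..(2*π),
          (σ * (pd (1,0) u (z,k))^2
           + 2*σ*k * (pd (1,0) u (z,k) * pd (1,0) (pd (0,1) u) (z,k))
           - 6*k^2 * (pd (1,0) (pd (1,0) u) (z,k))^2
           - 4*k^3 * (pd (1,0) (pd (1,0) u) (z,k) * pd (1,0) (pd (1,0) (pd (0,1) u)) (z,k))))
      = σ * (∫ z in (0:ℝ)..(2*π), pd (1,0) u (z,k) * pd (1,0) u (z,k))
        + (2*σ*k) * (∫ z in (0:ℝ)..(2*π),
            pd (1,0) u (z,k) * pd (1,0) (pd (0,1) u) (z,k))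
        + (-(6*k^2)) * (∫ z in (0:ℝ)..(2*π),
            pd (1,0) (pd (1,0) u) (z,k) * pd (1,0) (pd (1,0) u) (z,k))
        + (-(4*k^3)) * (∫ z in (0:ℝ)..(2*π),
            pd (1,0) (pd (1,0) u) (z,k) * pd (1,0) (pd (1,0) (pd (0,1) u)) (z,k)) := by
    rw [integral_congr (g := fun z =>
        σ * (pd (1,0) u (z,k) * pd (1,0) u (z,k))
        + (2*σ*k) * (pd (1,0) u (z,k) * pd (1,0) (pd (0,1) u) (z,k))
        + (-(6*k^2)) * (pd (1,0) (pd (1,0) u) (z,k) * pd (1,0) (pd (1,0) u) (z,k))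
        + (-(4*k^3)) * (pd (1,0) (pd (1,0) u) (z,k) * pd (1,0) (pd (1,0) (pd (0,1) u)) (z,k)))
      (fun z _ => by ring)]
    exact expand4 _ _ _ _ ((cs ca).mul (cs ca)) ((cs ca).mul (cs cw1))
      ((cs cb).mul (cs cb)) ((cs cb).mul (cs cw2))
  rw [hL, hR, I1, I2]; ring

end JordanAux

open JordanAux in
open JordanAux in
/-- The solvability quantity for the third Jordan chain equation equals `−A_k(k)`;
in particular the chain extends to length three iff `A_k(k) = 0`. -/
theorem jordan_chain_length_three_iff_Ak
    (σ : ℝ) (V : ℝ → ℝ) (uh : ℝ × ℝ → ℝ) (A : ℝ → ℝ)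
    (hV : ContDiff ℝ (⊤ : ℕ∞) V) (hu : ContDiff ℝ (⊤ : ℕ∞) uh)
    (hper : ∀ z k : ℝ, uh (z + 2*π, k) = uh (z, k))
    (hODE : ∀ z k : ℝ, k^4 * iteratedDeriv 4 (fun z' => uh (z', k)) z
        + σ * k^2 * iteratedDeriv 2 (fun z' => uh (z', k)) z + deriv V (uh (z, k)) = 0)
    (hA : ∀ k : ℝ, A k = (1/(2*π)) * ∫ z in (0:ℝ)..(2*π),
        (σ * k * (deriv (fun z' => uh (z', k)) z)^2
          - 2 * k^3 * (iteratedDeriv 2 (fun z' => uh (z', k)) z)^2)) :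
    ∀ k : ℝ, k ≠ 0 →
      ((1/(2*π)) * ∫ z in (0:ℝ)..(2*π),
          deriv (fun z' => uh (z', k)) z *
            (-(4*k^3 * iteratedDeriv 3 (fun z' => deriv (fun k' => uh (z', k')) k) z
                + 2*σ*k * deriv (fun z' => deriv (fun k' => uh (z', k')) k) z)
              - 6*k^2 * iteratedDeriv 3 (fun z' => uh (z', k)) z
              - σ * deriv (fun z' => uh (z', k)) z)
        = -(deriv A k)) ∧
      (((1/(2*π)) * ∫ z in (0:ℝ)..(2*π),
          deriv (fun z' => uh (z', k)) z *
            (-(4*k^3 * iteratedDeriv 3 (fun z' => deriv (fun k' => uh (z', k')) k) z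
                + 2*σ*k * deriv (fun z' => deriv (fun k' => uh (z', k')) k) z)
              - 6*k^2 * iteratedDeriv 3 (fun z' => uh (z', k)) z
              - σ * deriv (fun z' => uh (z', k)) z)) = 0 ↔ deriv A k = 0) := by
  intro k hk
  have hu2 : ∀ p : ℝ × ℝ, uh (p + (2*π, 0)) = uh p := by
    rintro ⟨z, kk⟩
    simpa using hper z kk
  have ca : ContDiff ℝ (⊤ : ℕ∞) (pd (1,0) uh) := pd_contDiff hu _
  have cb : ContDiff ℝ (⊤ : ℕ∞) (pd (1,0) (pd (1,0) uh)) := pd_contDiff ca _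
  have cw : ContDiff ℝ (⊤ : ℕ∞) (pd (0,1) uh) := pd_contDiff hu _
  have hcF : ContDiff ℝ (⊤ : ℕ∞) (fun p : ℝ × ℝ => σ * p.2 * (pd (1,0) uh p)^2
      - 2*p.2^3*(pd (1,0) (pd (1,0) uh) p)^2) :=
    ((contDiff_const.mul contDiff_snd).mul (ca.pow 2)).sub
      ((contDiff_const.mul (contDiff_snd.pow 3)).mul (cb.pow 2))
  have hcomm1 : pd (0,1) (pd (1,0) uh) = pd (1,0) (pd (0,1) uh) :=
    funext (pd_comm hu (1,0) (0,1))
  have hcomm2 : pd (0,1) (pd (1,0) (pd (1,0) uh)) = pd (1,0) (pd (1,0) (pd (0,1) uh)) := by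
    rw [funext (pd_comm ca (1,0) (0,1)), hcomm1]
  have hAfun : A = fun k' => 1/(2*π) * ∫ z in (0:ℝ)..(2*π),
      (σ * k' * (pd (1,0) uh (z,k'))^2 - 2*k'^3*(pd (1,0) (pd (1,0) uh) (z,k'))^2) := by
    funext k'
    rw [hA k']
    congr 1
    refine intervalIntegral.integral_congr fun z _ => ?_
    rw [deriv_slice_z hu z k', iteratedDeriv_two_slice hu z k']
  have hdA : deriv A k = 1/(2*π) * ∫ z in (0:ℝ)..(2*π),
      pd (0,1) (fun p : ℝ × ℝ => σ * p.2 * (pd (1,0) uh p)^2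
        - 2*p.2^3*(pd (1,0) (pd (1,0) uh) p)^2) (z,k) := by
    have h := HasDerivAt.const_mul (1/(2*π))
      (hasDerivAt_param_integral hcF 0 (2*π) k)
    rw [hAfun]
    exact h.deriv
  have hpt : ∀ z : ℝ, pd (0,1) (fun p : ℝ × ℝ => σ * p.2 * (pd (1,0) uh p)^2
        - 2*p.2^3*(pd (1,0) (pd (1,0) uh) p)^2) (z,k)
      = σ * (pd (1,0) uh (z,k))^2
        + 2*σ*k * (pd (1,0) uh (z,k) * pd (1,0) (pd (0,1) uh) (z,k))
        - 6*k^2 * (pd (1,0) (pd (1,0) uh) (z,k))^2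
        - 4*k^3 * (pd (1,0) (pd (1,0) uh) (z,k) * pd (1,0) (pd (1,0) (pd (0,1) uh)) (z,k)) := by
    intro z
    have hak := hasDerivAt_slice_k ca z k
    have hbk := hasDerivAt_slice_k cb z k
    have h1 : HasDerivAt (fun k' : ℝ => σ * k') σ k := by
      simpa using (hasDerivAt_id k).const_mul σ
    have h2 := (hasDerivAt_pow 3 k).const_mul (2:ℝ)
    have H2 := (h1.mul (hak.pow 2)).sub (h2.mul (hbk.pow 2))
    have hEq := (hasDerivAt_slice_k hcF z k).unique H2
    rw [hEq, hcomm1, hcomm2]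
    simp only [Pi.pow_apply]
    push_cast
    ring
  have hIA : (∫ z in (0:ℝ)..(2*π),
        pd (0,1) (fun p : ℝ × ℝ => σ * p.2 * (pd (1,0) uh p)^2
          - 2*p.2^3*(pd (1,0) (pd (1,0) uh) p)^2) (z,k))
      = ∫ z in (0:ℝ)..(2*π),
          (σ * (pd (1,0) uh (z,k))^2
           + 2*σ*k * (pd (1,0) uh (z,k) * pd (1,0) (pd (0,1) uh) (z,k))
           - 6*k^2 * (pd (1,0) (pd (1,0) uh) (z,k))^2
           - 4*k^3 * (pd (1,0) (pd (1,0) uh) (z,k) * pd (1,0) (pd (1,0) (pd (0,1) uh)) (z,k))) :=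
    intervalIntegral.integral_congr fun z _ => hpt z
  have hSint : (∫ z in (0:ℝ)..(2*π),
        deriv (fun z' => uh (z', k)) z *
            (-(4*k^3 * iteratedDeriv 3 (fun z' => deriv (fun k' => uh (z', k')) k) z
                + 2*σ*k * deriv (fun z' => deriv (fun k' => uh (z', k')) k) z)
              - 6*k^2 * iteratedDeriv 3 (fun z' => uh (z', k)) z
              - σ * deriv (fun z' => uh (z', k)) z))
      = ∫ z in (0:ℝ)..(2*π), pd (1,0) uh (z,k) *
        (-(4*k^3 * pd (1,0) (pd (1,0) (pd (1,0) (pd (0,1) uh))) (z,k)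
            + 2*σ*k * pd (1,0) (pd (0,1) uh) (z,k))
          - 6*k^2 * pd (1,0) (pd (1,0) (pd (1,0) uh)) (z,k)
          - σ * pd (1,0) uh (z,k)) := by
    refine intervalIntegral.integral_congr fun z _ => ?_
    have hfun : (fun z' => deriv (fun k' => uh (z', k')) k) = fun z' => pd (0,1) uh (z',k) :=
      funext fun z' => deriv_slice_k hu z' k
    rw [hfun, deriv_slice_z hu z k, iteratedDeriv_three_slice cw z k,
      deriv_slice_z cw z k, iteratedDeriv_three_slice hu z k]
  have hmain : ((1/(2*π)) * ∫ z in (0:ℝ)..(2*π),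
          deriv (fun z' => uh (z', k)) z *
            (-(4*k^3 * iteratedDeriv 3 (fun z' => deriv (fun k' => uh (z', k')) k) z
                + 2*σ*k * deriv (fun z' => deriv (fun k' => uh (z', k')) k) z)
              - 6*k^2 * iteratedDeriv 3 (fun z' => uh (z', k)) z
              - σ * deriv (fun z' => uh (z', k)) z)
        = -(deriv A k)) := by
    rw [hSint, key_calc σ k hu hu2, hdA, hIA]
    ring
  exact ⟨hmain, by rw [hmain, neg_eq_zero]⟩
end

section
/- Fix real numbers α, β, s, 𝒦 with s ≠ 0 and (1/12)β² − sα > 0. Let D = (1/12)β² − sα, Q₁ = −β/(6s) − √D/s and Q₂ = −Q₁ − β/(3s) (assume the sign chosen so Q₁ < Q₂), and let I = (β/(108 s²))(18 s α − β²). Then Q₁ and Q₂ are distinct real roots of the cubic I + α q + (1/2)β q² + s q³ = 0, and moreover I·Q₁ + (1/2)α Q₁² + (1/6)β Q₁³ + (s/4) Q₁⁴ = I·Q₂ + (1/2)α Q₂² + (1/6)β Q₂³ + (s/4) Q₂⁴. -/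
/-!
The cubic `f q = I + α q + ½ β q² + s q³` has its inflection point at `c = -β/(6s)`, and the
chosen `I` is exactly the value making `f c = 0`. Then `f (c + y) = y (s y² - D/s)` is odd in `y`,
so its roots besides `c` are `c ∓ √D/s`, i.e. `Q₁` and `Q₂`, and the potential `ℋ`, an
antiderivative of `f`, is even about `c`; hence `ℋ Q₁ = ℋ Q₂`.
-/

open Real

noncomputable def equilibriumCubic (I α β s q : ℝ) : ℝ := I + α*q + (1/2)*β*q^2 + s*q^3

noncomputable def quarticPotential (I α β s q : ℝ) : ℝ := I*q + (1/2)*α*q^2 + (1/6)*β*q^3 + (s/4)*q^4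

namespace equilibriumCubic

variable {I α β s : ℝ}

theorem inflection_eq_zero (hs : s ≠ 0) (hI : I = (β/(108*s^2)) * (18*s*α - β^2)) :
    equilibriumCubic I α β s (-β/(6*s)) = 0 := by
  rw [equilibriumCubic, hI]
  field_simp
  ring

theorem inflection_add (hs : s ≠ 0) (y : ℝ) :
    equilibriumCubic I α β s (-β/(6*s) + y) =
      equilibriumCubic I α β s (-β/(6*s)) - ((1/12)*β^2 - s*α) / s * y + s*y^3 := by
  simp only [equilibriumCubic]
  field_simp
  ring

theorem inflection_add_eq_zero (hs : s ≠ 0) (hc : equilibriumCubic I α β s (-β/(6*s)) = 0)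
    {y : ℝ} (hy : (s*y)^2 = (1/12)*β^2 - s*α) :
    equilibriumCubic I α β s (-β/(6*s) + y) = 0 := by
  rw [inflection_add hs, hc, ← hy]
  field_simp
  ring

end equilibriumCubic

namespace quarticPotential

variable {I α β s : ℝ}

theorem inflection_add (hs : s ≠ 0) (y : ℝ) :
    quarticPotential I α β s (-β/(6*s) + y) =
      quarticPotential I α β s (-β/(6*s)) + equilibriumCubic I α β s (-β/(6*s)) * y
        - ((1/12)*β^2 - s*α) / s * y^2 / 2 + s*y^4/4 := by
  simp only [quarticPotential, equilibriumCubic]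
  field_simp
  ring

theorem inflection_add_eq_sub (hs : s ≠ 0) (hc : equilibriumCubic I α β s (-β/(6*s)) = 0)
    (y : ℝ) :
    quarticPotential I α β s (-β/(6*s) + y) = quarticPotential I α β s (-β/(6*s) + -y) := by
  rw [inflection_add hs, inflection_add hs, hc]
  ring

end quarticPotential

/-- Explicit conjugate periodic states: `Q₁ ≠ Q₂` are roots of the cubic
`I + α q + ½β q² + s q³` and share the same quartic potential value. -/
theorem conjugate_states
    (α β s : ℝ) (hs : s ≠ 0)
    (D : ℝ) (hD : D = (1/12) * β^2 - s * α) (hDpos : 0 < D)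
    (Q₁ Q₂ I : ℝ)
    (hQ1 : Q₁ = -β/(6*s) - Real.sqrt D / s)
    (hQ2 : Q₂ = -Q₁ - β/(3*s))
    (hord : Q₁ < Q₂)
    (hI : I = (β/(108*s^2)) * (18*s*α - β^2)) :
    Q₁ ≠ Q₂ ∧
    I + α*Q₁ + (1/2)*β*Q₁^2 + s*Q₁^3 = 0 ∧
    I + α*Q₂ + (1/2)*β*Q₂^2 + s*Q₂^3 = 0 ∧
    I*Q₁ + (1/2)*α*Q₁^2 + (1/6)*β*Q₁^3 + (s/4)*Q₁^4
      = I*Q₂ + (1/2)*α*Q₂^2 + (1/6)*β*Q₂^3 + (s/4)*Q₂^4 := by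
  set r := Real.sqrt D / s
  have hQ1' : Q₁ = -β/(6*s) + -r := by rw [hQ1, sub_eq_add_neg]
  have hQ2' : Q₂ = -β/(6*s) + r := by rw [hQ2, hQ1]; field_simp; ring
  have hsr : (s*r)^2 = (1/12)*β^2 - s*α := by
    rw [mul_div_cancel₀ _ hs, Real.sq_sqrt hDpos.le, hD]
  have hc := equilibriumCubic.inflection_eq_zero hs hI
  refine ⟨hord.ne, ?_, ?_, ?_⟩
  · rw [hQ1']
    exact equilibriumCubic.inflection_add_eq_zero hs hc (by rwa [mul_neg, neg_sq])
  · rw [hQ2']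
    exact equilibriumCubic.inflection_add_eq_zero hs hc hsr
  · rw [hQ1', hQ2']
    exact (quarticPotential.inflection_add_eq_sub hs hc r).symm
end

section
/- Let p(q) = I + α q + (1/2)β q² + s q³ with s ≠ 0. If p has two distinct real roots Q₁, Q₂ at which the quartic ℋ(q) = I q + (1/2)α q² + (1/6)β q³ + (s/4)q⁴ takes the same value, then (1/12)β² − s α ≥ 0. -/
/-! Subtracting `p Q₂ = 0` from `p Q₁ = 0` and dividing by `Q₁ - Q₂` gives a linear relation
between the coefficients of `p`. Substituting it, the discriminant of `p'` becomes a sum of two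
squares, so it is nonnegative; `(1/12)*β^2 - s*α` is a twelfth of that discriminant. -/

lemma cubic_divided_difference_eq_zero {R : Type*} [CommRing R] [NoZeroDivisors R]
    {c₀ c₁ c₂ c₃ x y : R} (hxy : x ≠ y)
    (hx : c₀ + c₁ * x + c₂ * x ^ 2 + c₃ * x ^ 3 = 0)
    (hy : c₀ + c₁ * y + c₂ * y ^ 2 + c₃ * y ^ 3 = 0) :
    c₁ + c₂ * (x + y) + c₃ * (x ^ 2 + x * y + y ^ 2) = 0 := by
  have hfactor : (x - y) * (c₁ + c₂ * (x + y) + c₃ * (x ^ 2 + x * y + y ^ 2)) = 0 := by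
    linear_combination hx - hy
  exact (mul_eq_zero.mp hfactor).resolve_left (sub_ne_zero.mpr hxy)

lemma discrim_deriv_eq_of_divided_difference_eq_zero {R : Type*} [CommRing R]
    {c₁ c₂ c₃ x y : R} (h : c₁ + c₂ * (x + y) + c₃ * (x ^ 2 + x * y + y ^ 2) = 0) :
    discrim (3 * c₃) (2 * c₂) c₁ = (2 * c₂ + 3 * c₃ * (x + y)) ^ 2 + 3 * (c₃ * (x - y)) ^ 2 := by
  unfold discrim
  linear_combination (-12 * c₃) * h

lemma discrim_deriv_nonneg_of_cubic_roots {R : Type*} [CommRing R] [LinearOrder R]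
    [IsStrictOrderedRing R] {c₀ c₁ c₂ c₃ x y : R} (hxy : x ≠ y)
    (hx : c₀ + c₁ * x + c₂ * x ^ 2 + c₃ * x ^ 3 = 0)
    (hy : c₀ + c₁ * y + c₂ * y ^ 2 + c₃ * y ^ 3 = 0) :
    0 ≤ discrim (3 * c₃) (2 * c₂) c₁ := by
  rw [discrim_deriv_eq_of_divided_difference_eq_zero (cubic_divided_difference_eq_zero hxy hx hy)]
  positivity

theorem root_reality_condition_general
    (α β s I Q₁ Q₂ : ℝ) (hne : Q₁ ≠ Q₂)
    (h1 : I + α*Q₁ + (1/2)*β*Q₁^2 + s*Q₁^3 = 0)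
    (h2 : I + α*Q₂ + (1/2)*β*Q₂^2 + s*Q₂^3 = 0) :
    (1/12)*β^2 - s*α ≥ 0 := by
  have hdiscrim := discrim_deriv_nonneg_of_cubic_roots hne h1 h2
  unfold discrim at hdiscrim
  linarith

/-- Root-reality condition: if the cubic `I + α q + ½β q² + s q³` has two distinct real
roots at which the quartic potential takes the same value, then `β²/12 − sα ≥ 0`. -/
theorem root_reality_condition
    (α β s I Q₁ Q₂ : ℝ) (hs : s ≠ 0) (hne : Q₁ ≠ Q₂)
    (h1 : I + α*Q₁ + (1/2)*β*Q₁^2 + s*Q₁^3 = 0)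
    (h2 : I + α*Q₂ + (1/2)*β*Q₂^2 + s*Q₂^3 = 0)
    (h3 : I*Q₁ + (1/2)*α*Q₁^2 + (1/6)*β*Q₁^3 + (s/4)*Q₁^4
        = I*Q₂ + (1/2)*α*Q₂^2 + (1/6)*β*Q₂^3 + (s/4)*Q₂^4) :
    (1/12)*β^2 - s*α ≥ 0 :=
  root_reality_condition_general α β s I Q₁ Q₂ hne h1 h2
end
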